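/- Let a₄ = 2^{−12} Π_{p odd} [(1−1/p)^{10}/(1+1/p)] · [((1+1/√p)^{−4} + (1−1/√p)^{−4})/2 + 1/p]. Then a₄ = 2^{−12} Π_{p odd} [(1−1/p)^6/(1+1/p)] · (1 + 7/p − 3/p² + 6/p³ − 4/p⁴ + 1/p⁵), and consequently, with Z₁ as in the diagonal Euler product, Z₁(1/2, 1/2) = 4·a₄. -/

import Mathlib

/-- The constant
`a₄ = 2^{−12} Π_{p odd} [(1−1/p)^{10}/(1+1/p)] [((1+1/√p)^{−4} + (1−1/√p)^{−4})/2 + 1/p]`. -/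
noncomputable def a4 : ℝ :=
  2^(-12 : ℤ) * ∏' p : {p : ℕ // p.Prime ∧ p ≠ 2},
    ((1 - 1/(p:ℝ))^10 / (1 + 1/(p:ℝ))) *
      ((((1 + 1/Real.sqrt p)^(-4 : ℤ) + (1 - 1/Real.sqrt p)^(-4 : ℤ)) / 2) + 1/(p:ℝ))

/-- `Z₁(1/2,1/2) = 2^{−10} Π_{p odd} (1−1/p)^6 [1 + 6/p + 1/p² − (1/(p+1))(10/p − 5/p² + 4/p³ − 1/p⁴)]`. -/
noncomputable def Z1half : ℝ :=
  2^(-10 : ℤ) * ∏' p : {p : ℕ // p.Prime ∧ p ≠ 2},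
    (1 - 1/(p:ℝ))^6 *
      (1 + 6/(p:ℝ) + 1/(p:ℝ)^2
        - (1/((p:ℝ)+1)) * (10/(p:ℝ) - 5/(p:ℝ)^2 + 4/(p:ℝ)^3 - 1/(p:ℝ)^4))

/-! The two Euler products agree factor by factor. With `t = 1/√p`, the even part of
`(1 + t)^{-4}` is `(1 + 6t² + t⁴)/(1 - t²)^4`, which removes the square roots from `a₄`;
what is left, and the factor of `Z₁`, are rational functions of `p` that clear to the same
quintic. The constants then differ only by `2^{-10} = 4 · 2^{-12}`. -/

lemma add_zpow_neg_four_add_sub_zpow_neg_four {K : Type*} [Field K] [NeZero (2 : K)] {t : K}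
    (h : 1 - t ^ 2 ≠ 0) :
    ((1 + t) ^ (-4 : ℤ) + (1 - t) ^ (-4 : ℤ)) / 2
      = (1 + 6 * t ^ 2 + (t ^ 2) ^ 2) / (1 - t ^ 2) ^ 4 := by
  have hplus : 1 + t ≠ 0 := fun h' => h (by linear_combination (1 - t) * h')
  have hminus : 1 - t ≠ 0 := fun h' => h (by linear_combination (1 + t) * h')
  rw [zpow_neg, zpow_neg]
  field_simp
  ring

lemma a4_factor_eq {x : ℝ} (hx : 1 < x) :
    ((1 - 1/x)^10 / (1 + 1/x)) *
      ((((1 + 1/Real.sqrt x)^(-4 : ℤ) + (1 - 1/Real.sqrt x)^(-4 : ℤ)) / 2) + 1/x)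
    = ((1 - 1/x)^6 / (1 + 1/x)) * (1 + 7/x - 3/x^2 + 6/x^3 - 4/x^4 + 1/x^5) := by
  have hsq : (1 / Real.sqrt x) ^ 2 = 1 / x := by
    rw [div_pow, Real.sq_sqrt (by linarith), one_pow]
  have hx0 : x ≠ 0 := (zero_lt_one.trans hx).ne'
  have hx1 : x - 1 ≠ 0 := (sub_pos.2 hx).ne'
  rw [add_zpow_neg_four_add_sub_zpow_neg_four (by rw [hsq, one_sub_div hx0]; exact div_ne_zero hx1 hx0),
    hsq]
  field_simp
  ring

lemma Z1half_factor_eq {K : Type*} [Field K] {x : K} (hx : x ≠ 0) (hx1 : x + 1 ≠ 0) :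
    (1 - 1/x)^6 * (1 + 6/x + 1/x^2 - (1/(x+1)) * (10/x - 5/x^2 + 4/x^3 - 1/x^4))
    = ((1 - 1/x)^6 / (1 + 1/x)) * (1 + 7/x - 3/x^2 + 6/x^3 - 4/x^4 + 1/x^5) := by
  have : 1 + 1 / x ≠ 0 := by
    rw [one_add_div hx]
    exact div_ne_zero hx1 hx
  field_simp
  ring

/-- `a₄` equals the simplified Euler product, and consequently `Z₁(1/2,1/2) = 4 a₄`. -/
theorem a4_simplified_and_Z1_half :
    a4 = 2^(-12 : ℤ) * ∏' p : {p : ℕ // p.Prime ∧ p ≠ 2},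
        ((1 - 1/(p:ℝ))^6 / (1 + 1/(p:ℝ))) *
          (1 + 7/(p:ℝ) - 3/(p:ℝ)^2 + 6/(p:ℝ)^3 - 4/(p:ℝ)^4 + 1/(p:ℝ)^5)
    ∧ Z1half = 4 * a4 := by
  have hp : ∀ p : {p : ℕ // p.Prime ∧ p ≠ 2}, (1 : ℝ) < (p : ℕ) :=
    fun p => Nat.one_lt_cast.2 p.2.1.one_lt
  have ha4 : a4 = _ := congrArg _ (tprod_congr fun p => a4_factor_eq (hp p))
  refine ⟨ha4, ?_⟩
  rw [ha4, Z1half, tprod_congr fun p => Z1half_factor_eq (by linarith [hp p]) (by linarith [hp p]),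
    ← mul_assoc]
  norm_num
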